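/- arXiv:2411.05331 — 4 statements merged into one kernel-verified Lean document; each statement's English description precedes it below -/
import Mathlib

section
/- Let p : ℝ → ℝ be a nonnegative integrable probability density (∫ p = 1) whose Fourier transform (characteristic function) s ↦ ∫ e^{i s x} p(x) dx vanishes only on a set of Lebesgue measure zero in ℝ. If a, b ∈ ℝ are such that p(x − a) = p(x − b) for every x ∈ ℝ, then a = b. Equivalently, two translates of such a density coincide only if the translation amounts are equal. -/
open MeasureTheory

/-- **Denoising Lemma (Lemma 1), scalar form.** If `p` is a nonnegative integrable
probability density on `ℝ` whose characteristic function `s ↦ ∫ e^{isx} p(x) dx`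
vanishes only on a Lebesgue-null set, then two translates of `p` coincide only if
the translation amounts coincide. -/
theorem translates_eq_of_charFun_ae_ne_zero
    (p : ℝ → ℝ) (hnn : ∀ x, 0 ≤ p x) (hint : Integrable p)
    (hprob : ∫ x, p x = 1)
    (hzero :
      volume {s : ℝ | ∫ x : ℝ, Complex.exp (Complex.I * (s : ℂ) * (x : ℂ)) * (p x : ℂ) = 0} = 0)
    (a b : ℝ) (hab : ∀ x, p (x - a) = p (x - b)) : a = b := by
  by_contra hne
  set φ : ℝ → ℂ := fun s => ∫ x : ℝ, Complex.exp (Complex.I * (s : ℂ) * (x : ℂ)) * (p x : ℂ)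
    with hφ
  have shift : ∀ (s c : ℝ),
      (∫ x : ℝ, Complex.exp (Complex.I * (s : ℂ) * (x : ℂ)) * (p (x - c) : ℂ))
        = Complex.exp (Complex.I * (s : ℂ) * (c : ℂ)) * φ s := by
    intro s c
    have h1 := integral_sub_right_eq_self (μ := volume)
      (fun x : ℝ => Complex.exp (Complex.I * (s : ℂ) * ((x : ℂ) + (c : ℂ))) * (p x : ℂ)) c
    calc (∫ x : ℝ, Complex.exp (Complex.I * (s : ℂ) * (x : ℂ)) * (p (x - c) : ℂ))
        = ∫ x : ℝ, Complex.exp (Complex.I * (s : ℂ) * (((x - c : ℝ) : ℂ) + (c : ℂ)))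
            * (p (x - c) : ℂ) := by
          congr 1; funext x; push_cast; ring_nf
      _ = ∫ x : ℝ, Complex.exp (Complex.I * (s : ℂ) * ((x : ℂ) + (c : ℂ))) * (p x : ℂ) := h1
      _ = Complex.exp (Complex.I * (s : ℂ) * (c : ℂ)) * φ s := by
          rw [hφ, ← integral_const_mul]
          congr 1; funext x
          rw [mul_add, Complex.exp_add]; ring
  have key : ∀ s : ℝ, Complex.exp (Complex.I * (s : ℂ) * (a : ℂ)) * φ s
      = Complex.exp (Complex.I * (s : ℂ) * (b : ℂ)) * φ s := by
    intro s
    rw [← shift s a, ← shift s b]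
    congr 1; funext x; rw [hab x]
  -- On the complement of the zero set, exp(I s a) = exp(I s b)
  have hmem : ∀ s : ℝ, φ s ≠ 0 → ∃ n : ℤ, s = 2 * Real.pi * n / (a - b) := by
    intro s hs
    have h := mul_right_cancel₀ hs (key s)
    have h1 : Complex.exp (Complex.I * (s : ℂ) * (a : ℂ) - Complex.I * (s : ℂ) * (b : ℂ)) = 1 := by
      rw [Complex.exp_sub, h, div_self (Complex.exp_ne_zero _)]
    rw [Complex.exp_eq_one_iff] at h1
    obtain ⟨n, hn⟩ := h1
    refine ⟨n, ?_⟩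
    have hI : (Complex.I * (s : ℂ) * (a : ℂ) - Complex.I * (s : ℂ) * (b : ℂ))
        = ((s * (a - b) : ℝ) : ℂ) * Complex.I := by push_cast; ring
    have hn2 : ((s * (a - b) : ℝ) : ℂ) * Complex.I = ((2 * Real.pi * n : ℝ) : ℂ) * Complex.I := by
      rw [← hI, hn]; push_cast; ring
    have hn3 : (s * (a - b) : ℝ) = 2 * Real.pi * n := by
      have := mul_right_cancel₀ Complex.I_ne_zero hn2
      exact_mod_cast this
    have hab' : a - b ≠ 0 := sub_ne_zero.mpr hne
    field_simp [hab'] at hn3 ⊢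
    linarith [hn3]
  -- the countable set
  set T : Set ℝ := Set.range (fun n : ℤ => 2 * Real.pi * n / (a - b)) with hT
  have hTnull : volume T = 0 := (Set.countable_range _).measure_zero _
  have hcover : (Set.univ : Set ℝ) ⊆
      {s : ℝ | ∫ x : ℝ, Complex.exp (Complex.I * (s : ℂ) * (x : ℂ)) * (p x : ℂ) = 0} ∪ T := by
    intro s _
    by_cases hs : φ s = 0
    · exact Or.inl hs
    · obtain ⟨n, hn⟩ := hmem s hs
      exact Or.inr ⟨n, hn.symm⟩
  have : volume (Set.univ : Set ℝ) = 0 := by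
    refine le_antisymm ?_ zero_le
    calc volume (Set.univ : Set ℝ) ≤ volume ({s : ℝ | ∫ x : ℝ,
          Complex.exp (Complex.I * (s : ℂ) * (x : ℂ)) * (p x : ℂ) = 0} ∪ T) :=
        measure_mono hcover
      _ ≤ _ + _ := measure_union_le _ _
      _ = 0 := by rw [hzero, hTnull, add_zero]
  rw [Real.volume_univ] at this
  exact ENNReal.top_ne_zero this
end

section
/- Let S be a nonempty set and let ℱ be a linearly independent family of real-valued functions on S. Let f₁, …, f_D and f̂₁, …, f̂_D be members of ℱ, each list consisting of pairwise distinct functions. Let Z, Ẑ : {1,…,D} × {1,…,T} → ℝ be latent time series such that for every d there exists t with Z_{d,t} ≠ 0, and likewise for Ẑ (non-degeneracy). If for every ℓ ∈ S and every t ∈ {1,…,T} we have Σ_{j=1}^D f_j(ℓ) Z_{j,t} = Σ_{j=1}^D f̂_j(ℓ) Ẑ_{j,t}, then there exists a permutation σ of {1,…,D} such that f̂_j = f_{σ(j)} and Ẑ_{j,t} = Z_{σ(j),t} for all j and t. -/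
/-!
Both observation fields are, at each time `t`, linear combinations of the linearly independent
family `ℱ`, so their coefficient vectors on `ℱ` agree. A row `Zh j` that is not identically zero
therefore puts a nonzero coefficient on `fh j`, which forces `fh j` to be one of the `f k`; since
the `f k` are distinct, comparing the coefficients of `fh j = f k` then gives `Zh j = Z k`.
-/

open Function

namespace LinearIndependent

variable {ι α β R M : Type*} [Semiring R] [AddCommMonoid M] [Module R M] [Fintype α] [Fintype β]
  {v : ι → M} {u : α → ι} {u' : β → ι} {c : α → R} {c' : β → R}

theorem mapDomain_eq_of_sum_smul_eq (hv : LinearIndependent R v)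
    (h : ∑ a, c a • v (u a) = ∑ b, c' b • v (u' b)) :
    Finsupp.mapDomain u (Finsupp.equivFunOnFinite.symm c) =
      Finsupp.mapDomain u' (Finsupp.equivFunOnFinite.symm c') := by
  apply hv
  rw [Finsupp.linearCombination_mapDomain, Finsupp.linearCombination_mapDomain]
  simpa [Finsupp.linearCombination_apply, Finsupp.sum_fintype] using h

theorem mem_range_of_sum_smul_eq (hv : LinearIndependent R v) (hu' : Injective u')
    (h : ∑ a, c a • v (u a) = ∑ b, c' b • v (u' b)) {b : β} (hb : c' b ≠ 0) :
    u' b ∈ Set.range u := by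
  by_contra hnot
  have hcoeff := DFunLike.congr_fun (hv.mapDomain_eq_of_sum_smul_eq h) (u' b)
  rw [Finsupp.mapDomain_of_notMem_range _ _ hnot, Finsupp.mapDomain_apply hu'] at hcoeff
  exact hb (by simpa using hcoeff.symm)

theorem coeff_eq_of_sum_smul_eq (hv : LinearIndependent R v) (hu : Injective u)
    (hu' : Injective u') (h : ∑ a, c a • v (u a) = ∑ b, c' b • v (u' b)) {a : α} {b : β}
    (hab : u a = u' b) : c a = c' b := by
  have hcoeff := DFunLike.congr_fun (hv.mapDomain_eq_of_sum_smul_eq h) (u' b)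
  rw [← hab, Finsupp.mapDomain_apply hu, hab, Finsupp.mapDomain_apply hu'] at hcoeff
  simpa using hcoeff

end LinearIndependent

theorem linear_sfp_identifiability_general {S : Type*}
    (ℱ : Set (S → ℝ))
    (hli : LinearIndependent ℝ (fun φ : ℱ => (φ : S → ℝ)))
    (D T : ℕ) (f fh : Fin D → S → ℝ)
    (hf : ∀ j, f j ∈ ℱ) (hfh : ∀ j, fh j ∈ ℱ)
    (hfinj : Function.Injective f) (hfhinj : Function.Injective fh)
    (Z Zh : Fin D → Fin T → ℝ)
    (hZh : ∀ d, ∃ t, Zh d t ≠ 0)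
    (heq : ∀ (ℓ : S) (t : Fin T), ∑ j, f j ℓ * Z j t = ∑ j, fh j ℓ * Zh j t) :
    ∃ σ : Equiv.Perm (Fin D), ∀ j, fh j = f (σ j) ∧ ∀ t, Zh j t = Z (σ j) t := by
  let u : Fin D → ℱ := fun j => ⟨f j, hf j⟩
  let uh : Fin D → ℱ := fun j => ⟨fh j, hfh j⟩
  have hu : Injective u := fun a b h => hfinj (congrArg Subtype.val h)
  have huh : Injective uh := fun a b h => hfhinj (congrArg Subtype.val h)
  have hsum (t : Fin T) :
      ∑ j, Z j t • (u j : S → ℝ) = ∑ j, Zh j t • (uh j : S → ℝ) :=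
    funext fun ℓ => by simpa [u, uh, mul_comm] using heq ℓ t
  have hmatch (j : Fin D) : ∃ k, u k = uh j :=
    let ⟨t, ht⟩ := hZh j
    hli.mem_range_of_sum_smul_eq huh (hsum t) ht
  choose σ hσ using hmatch
  have hσinj : Injective σ := fun a b hab => huh (by rw [← hσ a, ← hσ b, hab])
  refine ⟨Equiv.ofBijective σ (Finite.injective_iff_bijective.mp hσinj), fun j => ⟨?_, fun t => ?_⟩⟩
  · exact congrArg Subtype.val (hσ j).symm
  · exact (hli.coeff_eq_of_sum_smul_eq hu huh (hsum t) (hσ j)).symm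

/-- **Identifiability of linear SFPs, deterministic core (Theorem 1).**
If the spatial factors `f j`, `fh j` are pairwise-distinct members of a linearly
independent family `ℱ` of real-valued functions on `S`, the latent time series
`Z`, `Zh` are non-degenerate (no row identically zero), and the noiseless
observation fields coincide at every location and time, then the factors and
latent series coincide up to a permutation. -/
theorem linear_sfp_identifiability {S : Type*} [Nonempty S]
    (ℱ : Set (S → ℝ))
    (hli : LinearIndependent ℝ (fun φ : ℱ => (φ : S → ℝ)))
    (D T : ℕ) (f fh : Fin D → S → ℝ)
    (hf : ∀ j, f j ∈ ℱ) (hfh : ∀ j, fh j ∈ ℱ)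
    (hfinj : Function.Injective f) (hfhinj : Function.Injective fh)
    (Z Zh : Fin D → Fin T → ℝ)
    (hZ : ∀ d, ∃ t, Z d t ≠ 0) (hZh : ∀ d, ∃ t, Zh d t ≠ 0)
    (heq : ∀ (ℓ : S) (t : Fin T), ∑ j, f j ℓ * Z j t = ∑ j, fh j ℓ * Zh j t) :
    ∃ σ : Equiv.Perm (Fin D), ∀ j, fh j = f (σ j) ∧ ∀ t, Zh j t = Z (σ j) t :=
  linear_sfp_identifiability_general ℱ hli D T f fh hf hfh hfinj hfhinj Z Zh hZh heq
end

section
/- Let U = (0,1)^K ⊂ ℝ^K and let F = {f₁,…,f_D} and G = {g₁,…,g_D} be two sets of linearly independent, real analytic functions on U. Let Φ_F ⊆ U^D be the set of D-tuples (ℓ₁,…,ℓ_D) ∈ U^D for which the D×D evaluation matrix with (i,j) entry f_i(ℓ_j) is invertible, and define Φ_G analogously. Then the complement of Φ_F ∩ Φ_G within U^D has Lebesgue measure zero; consequently Φ_F ∩ Φ_G has Lebesgue measure 1 (full measure in U^D) and, in particular, Φ_F ∩ Φ_G is nonempty. -/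
open MeasureTheory

/-- The open unit cube `(0,1)^K` in `ℝ^K`. -/
def unitCube (K : ℕ) : Set (Fin K → ℝ) := Set.univ.pi fun _ => Set.Ioo (0 : ℝ) 1

/-- The evaluation determinant: the determinant of the `D × D` matrix with
`(i, j)` entry `f i (ℓ j)`. -/
noncomputable def evalDetF {K D : ℕ} (f : Fin D → (Fin K → ℝ) → ℝ)
    (ℓ : Fin D → Fin K → ℝ) : ℝ :=
  (Matrix.of fun i j => f i (ℓ j)).det

/-- `Phi f` is the set of `D`-tuples of points of the unit cube for which the
evaluation matrix of `f` is invertible. -/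
def Phi {K D : ℕ} (f : Fin D → (Fin K → ℝ) → ℝ) : Set (Fin D → Fin K → ℝ) :=
  {ℓ | (∀ j, ℓ j ∈ unitCube K) ∧ evalDetF f ℓ ≠ 0}

open Filter
open scoped Topology

section snoc
variable {E : Type*} [NormedAddCommGroup E] [NormedSpace ℝ E] {n : ℕ}

lemma analyticAt_snoc_right (s : Fin n → E) (y : E) :
    AnalyticAt ℝ (fun y : E => (Fin.snoc s y : Fin (n + 1) → E)) y := by
  set L : E →L[ℝ] (Fin (n + 1) → E) :=
    ContinuousLinearMap.pi (fun i : Fin (n + 1) =>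
      if i = Fin.last n then ContinuousLinearMap.id ℝ E else 0) with hL
  have h : (fun y : E => (Fin.snoc s y : Fin (n + 1) → E)) =
      fun y => L y + (Fin.snoc s (0 : E) : Fin (n + 1) → E) := by
    funext y
    funext i
    refine Fin.lastCases ?_ (fun j => ?_) i
    · simp [hL, Fin.snoc_last, ContinuousLinearMap.pi_apply]
    · simp [hL, Fin.snoc_castSucc, ContinuousLinearMap.pi_apply,
        (Fin.castSucc_lt_last j).ne]
  rw [h]
  exact (L.analyticAt y).add analyticAt_const

lemma analyticAt_snoc_left (y₀ : E) (s : Fin n → E) :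
    AnalyticAt ℝ (fun s : Fin n → E => (Fin.snoc s y₀ : Fin (n + 1) → E)) s := by
  set L : (Fin n → E) →L[ℝ] (Fin (n + 1) → E) :=
    ContinuousLinearMap.pi (fun i : Fin (n + 1) =>
      if h : i = Fin.last n then 0 else ContinuousLinearMap.proj (i.castPred h)) with hL
  have h : (fun s : Fin n → E => (Fin.snoc s y₀ : Fin (n + 1) → E)) =
      fun s => L s + (Fin.snoc (0 : Fin n → E) y₀ : Fin (n + 1) → E) := by
    funext s
    funext i
    refine Fin.lastCases ?_ (fun j => ?_) i
    · simp [hL, Fin.snoc_last, ContinuousLinearMap.pi_apply]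
    · simp [hL, Fin.snoc_castSucc, ContinuousLinearMap.pi_apply,
        (Fin.castSucc_lt_last j).ne]
  rw [h]
  exact (L.analyticAt s).add analyticAt_const

end snoc

lemma countable_zeros_1d {φ : ℝ → ℝ} (hφ : AnalyticOnNhd ℝ φ (Set.Ioo 0 1))
    (h0 : ∃ t₀ ∈ Set.Ioo (0 : ℝ) 1, φ t₀ ≠ 0) :
    Set.Countable {t ∈ Set.Ioo (0 : ℝ) 1 | φ t = 0} := by
  set Z := {t ∈ Set.Ioo (0 : ℝ) 1 | φ t = 0} with hZ
  obtain ⟨t₀, ht₀, hφt₀⟩ := h0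
  have hiso : ∀ z ∈ Z, 𝓝[≠] z ⊓ Filter.principal Z = ⊥ := by
    intro z hz
    have hza : AnalyticAt ℝ φ z := hφ z hz.1
    rcases hza.eventually_eq_zero_or_eventually_ne_zero with h | h
    · exfalso
      have heq : Set.EqOn φ 0 (Set.Ioo 0 1) :=
        hφ.eqOn_zero_of_preconnected_of_frequently_eq_zero isPreconnected_Ioo hz.1
          (h.filter_mono nhdsWithin_le_nhds).frequently
      exact hφt₀ (heq ht₀)
    · rw [Filter.inf_principal_eq_bot]
      filter_upwards [h] with t ht hmem
      exact ht hmem.2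
  have : DiscreteTopology Z := discreteTopology_subtype_iff.mpr hiso
  rw [← Set.countable_coe_iff]
  exact TopologicalSpace.separableSpace_iff_countable.mp inferInstance

lemma isOpen_unitCube (n : ℕ) : IsOpen (unitCube n) :=
  isOpen_set_pi Set.finite_univ (fun _ _ => isOpen_Ioo)

lemma mem_unitCube {n : ℕ} {x : Fin n → ℝ} :
    x ∈ unitCube n ↔ ∀ i, x i ∈ Set.Ioo (0 : ℝ) 1 := by
  simp [unitCube]

lemma snoc_mem_unitCube {n : ℕ} {s : Fin n → ℝ} {t : ℝ} :
    (Fin.snoc s t : Fin (n + 1) → ℝ) ∈ unitCube (n + 1) ↔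
      s ∈ unitCube n ∧ t ∈ Set.Ioo (0 : ℝ) 1 := by
  simp only [mem_unitCube]
  constructor
  · intro h
    refine ⟨fun j => ?_, ?_⟩
    · simpa [Fin.snoc_castSucc] using h (Fin.castSucc j)
    · simpa [Fin.snoc_last] using h (Fin.last n)
  · rintro ⟨h1, h2⟩ i
    refine Fin.lastCases ?_ (fun j => ?_) i
    · simpa [Fin.snoc_last] using h2
    · simpa [Fin.snoc_castSucc] using h1 j

lemma measurableSet_zeroset {n : ℕ} {F : (Fin n → ℝ) → ℝ}
    (hF : ContinuousOn F (unitCube n)) :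
    MeasurableSet {x | x ∈ unitCube n ∧ F x = 0} := by
  have h1 : IsOpen (unitCube n ∩ F ⁻¹' {0}ᶜ) :=
    hF.isOpen_inter_preimage (isOpen_unitCube n) isOpen_compl_singleton
  have h2 : {x | x ∈ unitCube n ∧ F x = 0} =
      unitCube n \ (unitCube n ∩ F ⁻¹' {0}ᶜ) := by
    ext x
    simp only [Set.mem_setOf_eq, Set.mem_diff, Set.mem_inter_iff, Set.mem_preimage,
      Set.mem_compl_iff, Set.mem_singleton_iff]
    tauto
  rw [h2]
  exact (isOpen_unitCube n).measurableSet.diff h1.measurableSet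

lemma lemmaA : ∀ (n : ℕ) (F : (Fin n → ℝ) → ℝ),
    AnalyticOnNhd ℝ F (unitCube n) → (∃ a ∈ unitCube n, F a ≠ 0) →
    volume {x | x ∈ unitCube n ∧ F x = 0} = 0 := by
  intro n
  induction n with
  | zero =>
    intro F hF ⟨a, _, ha⟩
    have : {x | x ∈ unitCube 0 ∧ F x = 0} = ∅ := by
      ext x
      simp only [Set.mem_setOf_eq, Set.mem_empty_iff_false, iff_false, not_and]
      intro _
      rw [Subsingleton.elim x a]
      exact ha
    simp [this]
  | succ n ih =>
    intro F hF ⟨a, haU, ha⟩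
    set Z := {x | x ∈ unitCube (n + 1) ∧ F x = 0} with hZdef
    have hZm : MeasurableSet Z := measurableSet_zeroset hF.continuousOn
    set e := MeasurableEquiv.piFinSuccAbove (fun _ : Fin (n + 1) => ℝ) (Fin.last n) with he
    have hmp : MeasurePreserving e volume volume :=
      volume_preserving_piFinSuccAbove (fun _ : Fin (n + 1) => ℝ) (Fin.last n)
    have hesymm : ∀ p : ℝ × (Fin n → ℝ), e.symm p = Fin.snoc p.2 p.1 := by
      intro p
      show (Fin.insertNthEquiv (fun _ : Fin (n+1) => ℝ) (Fin.last n)) p = _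
      simp [Fin.insertNthEquiv, Fin.insertNth_last']
    set S : Set (ℝ × (Fin n → ℝ)) := e.symm ⁻¹' Z with hSdef
    have hSm : MeasurableSet S := e.symm.measurable hZm
    have hvolS : volume S = volume Z := (hmp.symm e).measure_preimage hZm.nullMeasurableSet
    set T : Set ((Fin n → ℝ) × ℝ) := Prod.swap ⁻¹' S with hTdef
    have hTm : MeasurableSet T := measurable_swap hSm
    have hvolT : volume T = volume S := by
      have := Measure.measurePreserving_swap (μ := (volume : Measure (Fin n → ℝ)))
        (ν := (volume : Measure ℝ))
      rw [Measure.volume_eq_prod, Measure.volume_eq_prod]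
      exact this.measure_preimage hSm.nullMeasurableSet
    -- the "bad set" from the inductive hypothesis
    set t₀ := a (Fin.last n) with ht₀def
    set a' := Fin.init a with ha'def
    have ht₀ : t₀ ∈ Set.Ioo (0 : ℝ) 1 := (mem_unitCube.mp haU) (Fin.last n)
    have hsnoca : (Fin.snoc a' t₀ : Fin (n+1) → ℝ) = a := Fin.snoc_init_self a
    set G : (Fin n → ℝ) → ℝ := fun s => F (Fin.snoc s t₀) with hGdef
    have hGa : AnalyticOnNhd ℝ G (unitCube n) := by
      intro s hs
      have hmem : (Fin.snoc s t₀ : Fin (n+1) → ℝ) ∈ unitCube (n+1) :=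
        snoc_mem_unitCube.mpr ⟨hs, ht₀⟩
      exact AnalyticAt.comp (g := F) (f := fun s => Fin.snoc s t₀) (hF _ hmem) (analyticAt_snoc_left t₀ s)
    have hGne : ∃ b ∈ unitCube n, G b ≠ 0 := by
      refine ⟨a', ?_, ?_⟩
      · rw [mem_unitCube]
        intro j
        exact (mem_unitCube.mp haU) (Fin.castSucc j)
      · rw [hGdef]
        simp only [hsnoca]
        exact ha
    have hN : volume {s | s ∈ unitCube n ∧ G s = 0} = 0 := ih G hGa hGne
    -- almost every s is good
    have hae : ∀ᵐ s : Fin n → ℝ, s ∉ {s | s ∈ unitCube n ∧ G s = 0} :=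
      measure_eq_zero_iff_ae_notMem.mp hN
    have hslice : ∀ᵐ s : Fin n → ℝ, volume (Prod.mk s ⁻¹' T) = 0 := by
      filter_upwards [hae] with s hs
      have hTslice : Prod.mk s ⁻¹' T =
          {t : ℝ | (Fin.snoc s t : Fin (n+1) → ℝ) ∈ unitCube (n+1) ∧ F (Fin.snoc s t) = 0} := by
        ext t
        simp only [hTdef, hSdef, Set.mem_preimage, Prod.swap_prod_mk, hesymm, hZdef,
          Set.mem_setOf_eq]
      by_cases hsU : s ∈ unitCube n
      · have hG0 : G s ≠ 0 := fun h => hs ⟨hsU, h⟩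
        have hsub : Prod.mk s ⁻¹' T ⊆ {t ∈ Set.Ioo (0:ℝ) 1 | F (Fin.snoc s t) = 0} := by
          rw [hTslice]
          intro t ⟨h1, h2⟩
          exact ⟨(snoc_mem_unitCube.mp h1).2, h2⟩
        refine measure_mono_null hsub ?_
        refine Set.Countable.measure_zero ?_ _
        refine countable_zeros_1d ?_ ⟨t₀, ht₀, hG0⟩
        intro t ht
        have hmem : (Fin.snoc s t : Fin (n+1) → ℝ) ∈ unitCube (n+1) :=
          snoc_mem_unitCube.mpr ⟨hsU, ht⟩
        exact AnalyticAt.comp (g := F) (f := fun t => Fin.snoc s t) (hF _ hmem) (analyticAt_snoc_right s t)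
      · have : Prod.mk s ⁻¹' T = ∅ := by
          rw [hTslice]
          ext t
          simp only [Set.mem_setOf_eq, Set.mem_empty_iff_false, iff_false, not_and]
          intro h1
          exact absurd (snoc_mem_unitCube.mp h1).1 hsU
        simp [this]
    have hT0 : volume T = 0 := by
      rw [Measure.volume_eq_prod, Measure.measure_prod_null hTm]
      exact hslice
    rw [← hvolS, ← hvolT, hT0]

lemma measurableSet_zerosetB {K D : ℕ} {F : (Fin D → Fin K → ℝ) → ℝ}
    (hF : ContinuousOn F {ℓ : Fin D → Fin K → ℝ | ∀ j, ℓ j ∈ unitCube K}) :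
    MeasurableSet {ℓ : Fin D → Fin K → ℝ | (∀ j, ℓ j ∈ unitCube K) ∧ F ℓ = 0} := by
  have hopen : IsOpen {ℓ : Fin D → Fin K → ℝ | ∀ j, ℓ j ∈ unitCube K} := by
    have : {ℓ : Fin D → Fin K → ℝ | ∀ j, ℓ j ∈ unitCube K} =
        Set.univ.pi fun _ : Fin D => unitCube K := by
      ext ℓ; simp [Set.mem_univ_pi]
    rw [this]
    exact isOpen_set_pi Set.finite_univ (fun _ _ => isOpen_unitCube K)
  have h1 : IsOpen ({ℓ : Fin D → Fin K → ℝ | ∀ j, ℓ j ∈ unitCube K} ∩ F ⁻¹' {0}ᶜ) :=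
    hF.isOpen_inter_preimage hopen isOpen_compl_singleton
  have h2 : {ℓ : Fin D → Fin K → ℝ | (∀ j, ℓ j ∈ unitCube K) ∧ F ℓ = 0} =
      {ℓ : Fin D → Fin K → ℝ | ∀ j, ℓ j ∈ unitCube K} \
        ({ℓ : Fin D → Fin K → ℝ | ∀ j, ℓ j ∈ unitCube K} ∩ F ⁻¹' {0}ᶜ) := by
    ext x
    simp only [Set.mem_setOf_eq, Set.mem_diff, Set.mem_inter_iff, Set.mem_preimage,
      Set.mem_compl_iff, Set.mem_singleton_iff]
    tauto
  rw [h2]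
  exact hopen.measurableSet.diff h1.measurableSet

lemma snoc_forall_mem {K n : ℕ} {s : Fin n → Fin K → ℝ} {y : Fin K → ℝ} :
    (∀ j, (Fin.snoc s y : Fin (n + 1) → Fin K → ℝ) j ∈ unitCube K) ↔
      (∀ j, s j ∈ unitCube K) ∧ y ∈ unitCube K := by
  constructor
  · intro h
    refine ⟨fun j => ?_, ?_⟩
    · simpa [Fin.snoc_castSucc] using h (Fin.castSucc j)
    · simpa [Fin.snoc_last] using h (Fin.last n)
  · rintro ⟨h1, h2⟩ j
    refine Fin.lastCases ?_ (fun i => ?_) j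
    · simpa [Fin.snoc_last] using h2
    · simpa [Fin.snoc_castSucc] using h1 i

lemma lemmaB (K : ℕ) : ∀ (D : ℕ) (F : (Fin D → Fin K → ℝ) → ℝ),
    AnalyticOnNhd ℝ F {ℓ : Fin D → Fin K → ℝ | ∀ j, ℓ j ∈ unitCube K} →
    (∃ a : Fin D → Fin K → ℝ, (∀ j, a j ∈ unitCube K) ∧ F a ≠ 0) →
    volume {ℓ : Fin D → Fin K → ℝ | (∀ j, ℓ j ∈ unitCube K) ∧ F ℓ = 0} = 0 := by
  intro D
  induction D with
  | zero =>
    intro F hF ⟨a, _, ha⟩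
    have : {ℓ : Fin 0 → Fin K → ℝ | (∀ j, ℓ j ∈ unitCube K) ∧ F ℓ = 0} = ∅ := by
      ext x
      simp only [Set.mem_setOf_eq, Set.mem_empty_iff_false, iff_false, not_and]
      intro _
      rw [Subsingleton.elim x a]
      exact ha
    rw [this, measure_empty]
  | succ n ih =>
    intro F hF ⟨a, haU, ha⟩
    set Z := {ℓ : Fin (n+1) → Fin K → ℝ | (∀ j, ℓ j ∈ unitCube K) ∧ F ℓ = 0} with hZdef
    have hZm : MeasurableSet Z := measurableSet_zerosetB hF.continuousOn
    set e := MeasurableEquiv.piFinSuccAbove (fun _ : Fin (n + 1) => (Fin K → ℝ)) (Fin.last n)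
      with he
    have hmp : MeasurePreserving e volume volume :=
      volume_preserving_piFinSuccAbove (fun _ : Fin (n + 1) => (Fin K → ℝ)) (Fin.last n)
    have hesymm : ∀ p : (Fin K → ℝ) × (Fin n → Fin K → ℝ), e.symm p = Fin.snoc p.2 p.1 := by
      intro p
      show (Fin.insertNthEquiv (fun _ : Fin (n+1) => (Fin K → ℝ)) (Fin.last n)) p = _
      simp [Fin.insertNthEquiv, Fin.insertNth_last']
    set S : Set ((Fin K → ℝ) × (Fin n → Fin K → ℝ)) := e.symm ⁻¹' Z with hSdef
    have hSm : MeasurableSet S := e.symm.measurable hZm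
    have hvolS : volume S = volume Z := (hmp.symm e).measure_preimage hZm.nullMeasurableSet
    set T : Set ((Fin n → Fin K → ℝ) × (Fin K → ℝ)) := Prod.swap ⁻¹' S with hTdef
    have hTm : MeasurableSet T := measurable_swap hSm
    have hvolT : volume T = volume S := by
      have := Measure.measurePreserving_swap (μ := (volume : Measure (Fin n → Fin K → ℝ)))
        (ν := (volume : Measure (Fin K → ℝ)))
      rw [Measure.volume_eq_prod, Measure.volume_eq_prod]
      exact this.measure_preimage hSm.nullMeasurableSet
    set y₀ := a (Fin.last n) with hy₀def
    set a' : Fin n → Fin K → ℝ := Fin.init a with ha'def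
    have hy₀ : y₀ ∈ unitCube K := haU (Fin.last n)
    have hsnoca : (Fin.snoc a' y₀ : Fin (n+1) → Fin K → ℝ) = a := Fin.snoc_init_self a
    set G : (Fin n → Fin K → ℝ) → ℝ := fun s => F (Fin.snoc s y₀) with hGdef
    have hGa : AnalyticOnNhd ℝ G {s : Fin n → Fin K → ℝ | ∀ j, s j ∈ unitCube K} := by
      intro s hs
      have hmem : ∀ j, (Fin.snoc s y₀ : Fin (n+1) → Fin K → ℝ) j ∈ unitCube K :=
        snoc_forall_mem.mpr ⟨hs, hy₀⟩
      exact AnalyticAt.comp (g := F) (f := fun s => Fin.snoc s y₀) (hF _ hmem)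
        (analyticAt_snoc_left y₀ s)
    have hGne : ∃ b : Fin n → Fin K → ℝ, (∀ j, b j ∈ unitCube K) ∧ G b ≠ 0 := by
      refine ⟨a', fun j => haU (Fin.castSucc j), ?_⟩
      rw [hGdef]
      simp only [hsnoca]
      exact ha
    have hN : volume {s : Fin n → Fin K → ℝ | (∀ j, s j ∈ unitCube K) ∧ G s = 0} = 0 :=
      ih G hGa hGne
    have hae : ∀ᵐ s : Fin n → Fin K → ℝ,
        s ∉ {s : Fin n → Fin K → ℝ | (∀ j, s j ∈ unitCube K) ∧ G s = 0} :=
      measure_eq_zero_iff_ae_notMem.mp hN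
    have hslice : ∀ᵐ s : Fin n → Fin K → ℝ, volume (Prod.mk s ⁻¹' T) = 0 := by
      filter_upwards [hae] with s hs
      have hTslice : Prod.mk s ⁻¹' T =
          {y : Fin K → ℝ | (∀ j, (Fin.snoc s y : Fin (n+1) → Fin K → ℝ) j ∈ unitCube K)
            ∧ F (Fin.snoc s y) = 0} := by
        ext y
        simp only [hTdef, hSdef, Set.mem_preimage, Prod.swap_prod_mk, hesymm, hZdef,
          Set.mem_setOf_eq]
      by_cases hsU : ∀ j, s j ∈ unitCube K
      · have hG0 : G s ≠ 0 := fun h => hs ⟨hsU, h⟩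
        have hsub : Prod.mk s ⁻¹' T ⊆
            {y | y ∈ unitCube K ∧ F (Fin.snoc s y) = 0} := by
          rw [hTslice]
          intro y ⟨h1, h2⟩
          exact ⟨(snoc_forall_mem.mp h1).2, h2⟩
        refine measure_mono_null hsub ?_
        refine lemmaA K (fun y => F (Fin.snoc s y)) ?_ ⟨y₀, hy₀, hG0⟩
        intro y hy
        have hmem : ∀ j, (Fin.snoc s y : Fin (n+1) → Fin K → ℝ) j ∈ unitCube K :=
          snoc_forall_mem.mpr ⟨hsU, hy⟩
        exact AnalyticAt.comp (g := F) (f := fun y => Fin.snoc s y) (hF _ hmem)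
          (analyticAt_snoc_right s y)
      · have : Prod.mk s ⁻¹' T = ∅ := by
          rw [hTslice]
          ext y
          simp only [Set.mem_setOf_eq, Set.mem_empty_iff_false, iff_false, not_and]
          intro h1
          exact absurd (snoc_forall_mem.mp h1).1 hsU
        simp [this]
    have hT0 : volume T = 0 := by
      rw [Measure.volume_eq_prod, Measure.measure_prod_null hTm]
      exact hslice
    rw [← hvolS, ← hvolT, hT0]

lemma analyticOnNhd_evalDet {K D : ℕ} (f : Fin D → (Fin K → ℝ) → ℝ)
    (hfa : ∀ i, AnalyticOnNhd ℝ (f i) (unitCube K)) :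
    AnalyticOnNhd ℝ (fun ℓ : Fin D → Fin K → ℝ => (Matrix.of fun i j => f i (ℓ j)).det)
      {ℓ : Fin D → Fin K → ℝ | ∀ j, ℓ j ∈ unitCube K} := by
  intro ℓ hℓ
  have h : (fun ℓ : Fin D → Fin K → ℝ => (Matrix.of fun i j => f i (ℓ j)).det) =
      fun ℓ => ∑ σ : Equiv.Perm (Fin D),
        ((Equiv.Perm.sign σ : ℤ) : ℝ) * ∏ i, f (σ i) (ℓ i) := by
    funext ℓ
    rw [Matrix.det_apply]
    congr 1
    funext σ
    simp [Units.smul_def, zsmul_eq_mul]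
  rw [h]
  apply Finset.analyticAt_fun_sum
  intro σ _
  apply analyticAt_const.mul
  apply Finset.analyticAt_fun_prod
  intro i _
  have hproj : AnalyticAt ℝ (fun z : Fin D → Fin K → ℝ => z i) ℓ :=
    (ContinuousLinearMap.proj (R := ℝ) (φ := fun _ : Fin D => Fin K → ℝ) i).analyticAt ℓ
  exact AnalyticAt.comp (g := f (σ i)) (hfa (σ i) _ (hℓ i)) hproj

lemma exists_evalDet_ne_zero {K D : ℕ} (f : Fin D → (Fin K → ℝ) → ℝ)
    (hfli : ∀ c : Fin D → ℝ, (∀ ℓ ∈ unitCube K, ∑ i, c i * f i ℓ = 0) → ∀ i, c i = 0) :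
    ∃ a : Fin D → Fin K → ℝ, (∀ j, a j ∈ unitCube K) ∧
      (Matrix.of fun i j => f i (a j)).det ≠ 0 := by
  classical
  set V : Set (Fin D → ℝ) := (fun ℓ => fun i => f i ℓ) '' unitCube K with hV
  have hspan : Submodule.span ℝ V = ⊤ := by
    by_contra h
    obtain ⟨φ, φ0, hφ⟩ := Submodule.exists_dual_map_eq_bot_of_lt_top
      (lt_top_iff_ne_top.mpr h) inferInstance
    have hker : ∀ x ∈ Submodule.span ℝ V, φ x = 0 := by
      intro x hx
      have : φ x ∈ (Submodule.span ℝ V).map φ := Submodule.mem_map_of_mem hx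
      rw [hφ] at this
      simpa using this
    set c : Fin D → ℝ := fun i => φ (Pi.single i 1) with hc
    have hphi : ∀ x : Fin D → ℝ, φ x = ∑ i, x i * c i := by
      intro x
      conv_lhs => rw [pi_eq_sum_univ x]
      rw [map_sum]
      congr 1
      funext i
      rw [φ.map_smul]
      simp only [hc, smul_eq_mul]
      congr 2
      funext j
      simp [Pi.single_apply, eq_comm]
    have hcz : ∀ i, c i = 0 := by
      apply hfli
      intro ℓ hℓ
      have hmem : (fun i => f i ℓ) ∈ Submodule.span ℝ V :=
        Submodule.subset_span ⟨ℓ, hℓ, rfl⟩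
      have := hker _ hmem
      rw [hphi] at this
      simpa [mul_comm] using this
    apply φ0
    apply LinearMap.ext
    intro x
    rw [hphi]
    simp [hcz]
  obtain ⟨b, hbV, hbsp, hbi⟩ := exists_linearIndependent ℝ V
  have hbfin : b.Finite := hbi.setFinite
  have hfin : Fintype b := hbfin.fintype
  have hB : Module.Basis b ℝ (Fin D → ℝ) := Module.Basis.mk hbi (by
    rw [Subtype.range_coe, hbsp, hspan])
  have hcard : Fintype.card b = D := by
    have := Module.finrank_eq_card_basis hB
    rw [Module.finrank_fin_fun] at this
    exact this.symm
  set eq : Fin D ≃ b := (Fintype.equivFinOfCardEq hcard).symm with heq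
  have hchoice : ∀ j : Fin D, ∃ ℓ ∈ unitCube K, (fun i => f i ℓ) = (eq j : Fin D → ℝ) := by
    intro j
    have : (eq j : Fin D → ℝ) ∈ V := hbV (eq j).2
    obtain ⟨ℓ, hℓ, hf⟩ := this
    exact ⟨ℓ, hℓ, hf⟩
  choose a haU hfa using hchoice
  refine ⟨a, haU, ?_⟩
  have hli : LinearIndependent ℝ
      (fun j : Fin D => Matrix.transpose (Matrix.of fun i j' => f i (a j')) j) := by
    have hcols : (fun j : Fin D => Matrix.transpose (Matrix.of fun i j' => f i (a j')) j) =
        (fun x : b => (x : Fin D → ℝ)) ∘ eq := by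
      funext j
      simp only [Function.comp_apply, ← hfa j]
      rfl
    rw [hcols]
    exact hbi.comp eq eq.injective
  have := Matrix.linearIndependent_cols_iff_isUnit.mp hli
  rw [Matrix.isUnit_iff_isUnit_det] at this
  exact this.ne_zero

/-- **Lemma 4, part 1.** For two sets `F = {f₁,…,f_D}`, `G = {g₁,…,g_D}` of linearly
independent real analytic functions on the unit cube `U = (0,1)^K`, the complement
within `U^D` of `Φ_F ∩ Φ_G` is Lebesgue-null; consequently `Φ_F ∩ Φ_G` has Lebesgue
measure `1` (full measure in `U^D`), and in particular it is nonempty. -/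
theorem phi_inter_full_measure {K D : ℕ}
    (f g : Fin D → (Fin K → ℝ) → ℝ)
    (hfa : ∀ i, AnalyticOnNhd ℝ (f i) (unitCube K))
    (hga : ∀ i, AnalyticOnNhd ℝ (g i) (unitCube K))
    (hfli : ∀ c : Fin D → ℝ, (∀ ℓ ∈ unitCube K, ∑ i, c i * f i ℓ = 0) → ∀ i, c i = 0)
    (hgli : ∀ c : Fin D → ℝ, (∀ ℓ ∈ unitCube K, ∑ i, c i * g i ℓ = 0) → ∀ i, c i = 0) :
    volume ({ℓ : Fin D → Fin K → ℝ | ∀ j, ℓ j ∈ unitCube K} \ (Phi f ∩ Phi g)) = 0 ∧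
      volume (Phi f ∩ Phi g) = 1 ∧ (Phi f ∩ Phi g).Nonempty := by
  set Cset : Set (Fin D → Fin K → ℝ) := {ℓ | ∀ j, ℓ j ∈ unitCube K} with hCset
  have hZf : volume {ℓ : Fin D → Fin K → ℝ | (∀ j, ℓ j ∈ unitCube K) ∧ evalDetF f ℓ = 0} = 0 := by
    apply lemmaB K D (evalDetF f) (analyticOnNhd_evalDet f hfa)
    obtain ⟨a, h1, h2⟩ := exists_evalDet_ne_zero f hfli
    exact ⟨a, h1, h2⟩
  have hZg : volume {ℓ : Fin D → Fin K → ℝ | (∀ j, ℓ j ∈ unitCube K) ∧ evalDetF g ℓ = 0} = 0 := by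
    apply lemmaB K D (evalDetF g) (analyticOnNhd_evalDet g hga)
    obtain ⟨a, h1, h2⟩ := exists_evalDet_ne_zero g hgli
    exact ⟨a, h1, h2⟩
  have hdiff : volume (Cset \ (Phi f ∩ Phi g)) = 0 := by
    refine measure_mono_null ?_ (measure_union_null hZf hZg)
    rintro ℓ ⟨hC, hn⟩
    rw [Set.mem_inter_iff] at hn
    push_neg at hn
    by_cases hf' : ℓ ∈ Phi f
    · right
      have hng : ¬ (ℓ ∈ Phi g) := hn hf'
      simp only [Phi, Set.mem_setOf_eq, not_and, not_not] at hng
      exact ⟨hC, hng hC⟩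
    · left
      simp only [Phi, Set.mem_setOf_eq, not_and, not_not] at hf'
      exact ⟨hC, hf' hC⟩
  have hCvol : volume Cset = 1 := by
    have h1 : Cset = Set.univ.pi fun _ : Fin D => unitCube K := by
      ext ℓ; simp [hCset, Set.mem_univ_pi]
    have hcube : volume (unitCube K) = 1 := by
      rw [unitCube, volume_pi_pi]
      simp [Real.volume_Ioo]
    rw [h1, volume_pi_pi]
    simp [hcube]
  have hsub : Phi f ∩ Phi g ⊆ Cset := fun ℓ hℓ => hℓ.1.1
  have hvol : volume (Phi f ∩ Phi g) = 1 := by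
    apply le_antisymm
    · rw [← hCvol]; exact measure_mono hsub
    · have hC2 : Cset ⊆ (Phi f ∩ Phi g) ∪ (Cset \ (Phi f ∩ Phi g)) := by
        intro x hx
        by_cases h : x ∈ Phi f ∩ Phi g
        · exact Or.inl h
        · exact Or.inr ⟨hx, h⟩
      calc (1 : ENNReal) = volume Cset := hCvol.symm
        _ ≤ volume ((Phi f ∩ Phi g) ∪ (Cset \ (Phi f ∩ Phi g))) := measure_mono hC2
        _ ≤ volume (Phi f ∩ Phi g) + volume (Cset \ (Phi f ∩ Phi g)) := measure_union_le _ _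
        _ = volume (Phi f ∩ Phi g) := by rw [hdiff, add_zero]
  refine ⟨hdiff, hvol, ?_⟩
  rw [Set.nonempty_iff_ne_empty]
  intro hemp
  rw [hemp, measure_empty] at hvol
  exact zero_ne_one hvol
end

section
/- Let S be a set and ℱ a linearly independent family of real-valued functions on S. Let f₁,…,f_D and g₁,…,g_D be members of ℱ, each list pairwise distinct. Let J be an invertible real D×D matrix and c₀ ∈ ℝ such that for every ℓ ∈ S and every i ∈ {1,…,D}: Σ_{k=1}^D f_k(ℓ) J_{k,i} = c₀ g_i(ℓ). Then c₀ ≠ 0, and there exists a permutation σ of {1,…,D} such that g_i = f_{σ(i)} for every i, J_{σ(i),i} = c₀, and J_{k,i} = 0 for all k ≠ σ(i); that is, J is the product of a permutation matrix and a nonzero scalar. -/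
/-- **Permutation-scaling step of Theorem 2.** Let `ℱ` be a linearly independent
family of real-valued functions on `S`, and let `f`, `g` be lists of pairwise
distinct members of `ℱ`. If `J` is an invertible `D × D` real matrix and `c₀ ∈ ℝ`
satisfy `∑ k, f k ℓ * J k i = c₀ * g i ℓ` for all `ℓ ∈ S` and `i`, then `c₀ ≠ 0`
and `J` is the product of a permutation matrix and the nonzero scalar `c₀`:
there is a permutation `σ` with `g i = f (σ i)`, `J (σ i) i = c₀`, and all other
entries of column `i` vanish. -/
theorem jacobian_is_permutation_scaling {S : Type*}
    (ℱ : Set (S → ℝ))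
    (hli : LinearIndependent ℝ (fun φ : ℱ => (φ : S → ℝ)))
    (D : ℕ) (hD : 0 < D) (f g : Fin D → S → ℝ)
    (hf : ∀ k, f k ∈ ℱ) (hg : ∀ i, g i ∈ ℱ)
    (hfinj : Function.Injective f) (hginj : Function.Injective g)
    (J : Matrix (Fin D) (Fin D) ℝ) (hJ : IsUnit J) (c₀ : ℝ)
    (heq : ∀ (ℓ : S) (i : Fin D), ∑ k, f k ℓ * J k i = c₀ * g i ℓ) :
    c₀ ≠ 0 ∧ ∃ σ : Equiv.Perm (Fin D), ∀ i,
      g i = f (σ i) ∧ J (σ i) i = c₀ ∧ ∀ k, k ≠ σ i → J k i = 0 := by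
  classical
  haveI : Nonempty (Fin D) := ⟨⟨0, hD⟩⟩
  -- f is linearly independent as a family
  have hfli : LinearIndependent ℝ f := by
    have hcomp : f = (fun φ : ℱ => (φ : S → ℝ)) ∘ fun k => (⟨f k, hf k⟩ : ℱ) := rfl
    rw [hcomp]
    exact hli.comp _ (fun a b hab => hfinj (congrArg Subtype.val hab))
  -- c₀ ≠ 0
  have hc₀ : c₀ ≠ 0 := by
    intro hc
    have hcol : ∀ i k, J k i = 0 := by
      intro i
      have h0 : ∑ k, J k i • f k = 0 := by
        funext ℓ
        have := heq ℓ i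
        rw [hc, zero_mul] at this
        simpa [Finset.sum_apply, mul_comm] using this
      exact Fintype.linearIndependent_iff.mp hfli _ h0
    have hJ0 : J = 0 := by ext k i; exact hcol i k
    rw [hJ0, Matrix.isUnit_iff_isUnit_det, Matrix.det_zero] at hJ
    exact (not_isUnit_zero hJ)
  -- each g i is some f k
  have hrange : ∀ i, ∃ k, f k = g i := by
    intro i
    by_contra h
    push_neg at h
    set v : Option (Fin D) → ℱ := fun o => o.elim ⟨g i, hg i⟩ (fun k => ⟨f k, hf k⟩) with hv
    have hvinj : Function.Injective v := by
      rintro (_ | a) (_ | b) hab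
      · rfl
      · exact absurd (congrArg Subtype.val hab).symm (h b)
      · exact absurd (congrArg Subtype.val hab) (h a)
      · exact congrArg some (hfinj (congrArg Subtype.val hab))
    have hvli : LinearIndependent ℝ (fun o => ((v o : ℱ) : S → ℝ)) := hli.comp v hvinj
    set c : Option (Fin D) → ℝ := fun o => o.elim (-c₀) (fun k => J k i) with hcdef
    have hsum : ∑ o, c o • ((v o : ℱ) : S → ℝ) = 0 := by
      funext ℓ
      have := heq ℓ i
      simp only [Finset.sum_apply, Pi.zero_apply, Fintype.sum_option, hcdef, hv,
        Option.elim, Pi.smul_apply, smul_eq_mul]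
      rw [Finset.sum_congr rfl (fun k _ => (mul_comm (J k i) (f k ℓ)))]
      linarith [this]
    have := Fintype.linearIndependent_iff.mp hvli c hsum none
    simp [hcdef] at this
    exact hc₀ this
  choose τ hτ using hrange
  have hτinj : Function.Injective τ := by
    intro a b hab
    exact hginj (by rw [← hτ a, ← hτ b, hab])
  let σ : Equiv.Perm (Fin D) := Equiv.ofBijective τ (Finite.injective_iff_bijective.mp hτinj)
  refine ⟨hc₀, σ, fun i => ?_⟩
  have hσ : σ i = τ i := rfl
  have hgi : g i = f (σ i) := by rw [hσ, hτ]
  -- linear independence on column i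
  set c : Fin D → ℝ := fun k => J k i - (if k = σ i then c₀ else 0) with hcdef
  have hsum : ∑ k, c k • f k = 0 := by
    funext ℓ
    have h1 := heq ℓ i
    have h2 : g i ℓ = f (σ i) ℓ := by rw [hgi]
    simp only [Finset.sum_apply, Pi.zero_apply, Pi.smul_apply, smul_eq_mul, hcdef,
      sub_mul, Finset.sum_sub_distrib, ite_mul, zero_mul]
    rw [Finset.sum_ite_eq' Finset.univ (σ i)]
    simp only [Finset.mem_univ, if_true]
    have h3 : ∑ x, J x i * f x ℓ = ∑ x, f x ℓ * J x i :=
      Finset.sum_congr rfl (fun k _ => mul_comm _ _)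
    rw [h3, h1, h2]
    ring
  have hzero := Fintype.linearIndependent_iff.mp hfli c hsum
  refine ⟨hgi, ?_, fun k hk => ?_⟩
  · have := hzero (σ i)
    simp [hcdef] at this
    linarith
  · have := hzero k
    simp [hcdef, hk] at this
    exact this
end
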